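/- Let ψ ∈ (ℂ²)^{⊗4} be a unit four-qubit vector such that every single-qubit reduced density operator of |ψ⟩⟨ψ| equals (1/2)·1 and σ_x^{⊗4} ψ = σ_y^{⊗4} ψ = σ_z^{⊗4} ψ = ψ, where σ_x, σ_y, σ_z are the Pauli matrices. Then 𝒞₃(ψ) = 1 = log₂ 2, the maximal value, attained when all four qubits are measured in the eigenbases of σ_x, σ_y and σ_z (which form a complete set of three MUBs of ℂ²); in particular ψ also maximizes 𝒞₂. -/

import Mathlib

/-! In every orthonormal basis the outcome on a qubit whose reduced state is `1/2` is uniform, so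
it carries one bit of entropy, and the mutual information with the rest is at most that bit since
a marginal never has more entropy than the joint distribution. Conversely, if `σ^{⊗n} ψ = ψ` and
every qubit is measured in the `±1` eigenbasis of `σ`, all amplitudes of odd total parity vanish:
the outcome on one qubit is a function of the others, the joint and the remaining-qubits entropies
agree, and the mutual information is exactly one bit. The eigenbases of `σ_x`, `σ_y`, `σ_z` are
mutually unbiased, so they realise the maximum of `C_N` for `N ≤ 3`. -/

open scoped BigOperators ComplexOrder

namespace Paper

noncomputable section

/-- Base-2 Shannon entropy of a finitely indexed probability vector. -/
def shannon {α : Type*} [Fintype α] (p : α → ℝ) : ℝ :=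
  ∑ a, -(p a * Real.logb 2 (p a))

/-- Joint outcome type for `n` subsystems of local dimension `d`. -/
abbrev Idx (n d : ℕ) := Fin n → Fin d

/-- The projector `|ψ⟩⟨ψ|`. -/
def proj {α : Type*} (ψ : α → ℂ) : Matrix α α ℂ :=
  Matrix.of fun x y => ψ x * (starRingEnd ℂ) (ψ y)

/-- A density operator: positive semidefinite with trace one. -/
def IsDensityOp {α : Type*} [Fintype α] [DecidableEq α] (ρ : Matrix α α ℂ) : Prop :=
  ρ.PosSemidef ∧ ρ.trace = 1

/-- `B` is an orthonormal basis of `ℂ^d` (`B i` is the `i`-th basis vector). -/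
def IsONB {d : ℕ} (B : Fin d → Fin d → ℂ) : Prop :=
  ∀ i j, (∑ x, (starRingEnd ℂ) (B i x) * B j x) = if i = j then 1 else 0

/-- Two bases of `ℂ^d` are mutually unbiased. -/
def MutUnbiased {d : ℕ} (B B' : Fin d → Fin d → ℂ) : Prop :=
  ∀ i j, ‖∑ x, (starRingEnd ℂ) (B i x) * B' j x‖ ^ 2 = 1 / d

/-- Joint outcome distribution of measuring the orthonormal basis `B l` on each factor `l`. -/
def jointProb {n d : ℕ} (ρ : Matrix (Idx n d) (Idx n d) ℂ)
    (B : Fin n → Fin d → Fin d → ℂ) (i : Idx n d) : ℝ :=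
  (∑ x : Idx n d, ∑ y : Idx n d,
    (∏ l, (starRingEnd ℂ) (B l (i l) (x l))) * ρ x y * (∏ l, B l (i l) (y l))).re

/-- Marginal distribution of subsystem `l`. -/
def margAt {n d : ℕ} (p : Idx n d → ℝ) (l : Fin n) (i : Fin d) : ℝ :=
  ∑ x : Idx n d, if x l = i then p x else 0

/-- Insert outcome `i` at position `l` into a tuple of outcomes of the other subsystems. -/
def insertAt {n d : ℕ} (l : Fin n) (i : Fin d) (g : {m : Fin n // m ≠ l} → Fin d) : Idx n d :=
  fun m => if h : m = l then i else g ⟨m, h⟩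

/-- Marginal distribution of all subsystems except `l`. -/
def margRest {n d : ℕ} (p : Idx n d → ℝ) (l : Fin n)
    (g : {m : Fin n // m ≠ l} → Fin d) : ℝ :=
  ∑ i : Fin d, p (insertAt l i g)

/-- Mutual information `I(B⁽ˡ⁾ : B⁽ˡ̄⁾)` between the outcome at subsystem `l` and the
outcomes at the remaining subsystems, for the joint outcome distribution `p`. -/
def mutualInfo {n d : ℕ} (p : Idx n d → ℝ) (l : Fin n) : ℝ :=
  shannon (margAt p l) + shannon (margRest p l) - shannon p

/-- The correlation function `C_N(ρ, {B_k^{(l)}})`. -/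
def CNval {n d : ℕ} (N : ℕ) (ρ : Matrix (Idx n d) (Idx n d) ℂ)
    (B : Fin N → Fin n → Fin d → Fin d → ℂ) : ℝ :=
  (1 / (n * N)) * ∑ k, ∑ l, mutualInfo (jointProb ρ (B k)) l

/-- `B k l` is, for each subsystem `l`, a family of `N` pairwise mutually unbiased
orthonormal bases (indexed by `k`). -/
def ValidMUBs {n d : ℕ} (N : ℕ) (B : Fin N → Fin n → Fin d → Fin d → ℂ) : Prop :=
  (∀ k l, IsONB (B k l)) ∧ ∀ l k k', k ≠ k' → MutUnbiased (B k l) (B k' l)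

/-- The set of values `C_N(ρ, ·)` over all admissible choices of MUBs;
`𝒞_N(ρ)` is the supremum of this set. -/
def CNvalues {n d : ℕ} (N : ℕ) (ρ : Matrix (Idx n d) (Idx n d) ℂ) : Set ℝ :=
  {x | ∃ B : Fin N → Fin n → Fin d → Fin d → ℂ, ValidMUBs N B ∧ x = CNval N ρ B}

/-- Single-subsystem reduced state `tr_{l̄} ρ`. -/
def reducedAt {n d : ℕ} (ρ : Matrix (Idx n d) (Idx n d) ℂ) (l : Fin n) :
    Matrix (Fin d) (Fin d) ℂ :=
  Matrix.of fun i j =>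
    ∑ g : {m : Fin n // m ≠ l} → Fin d, ρ (insertAt l i g) (insertAt l j g)

/-- `ω_d = exp(2πi/d)`. -/
def ω (d : ℕ) : ℂ := Complex.exp (2 * Real.pi * Complex.I / d)

/-- The generalized Pauli operator `X_d`. -/
def Xmat (d : ℕ) : Matrix (Fin d) (Fin d) ℂ :=
  Matrix.of fun i j => if (i : ℕ) = ((j : ℕ) + 1) % d then 1 else 0

/-- The generalized Pauli operator `Z_d`. -/
def Zmat (d : ℕ) : Matrix (Fin d) (Fin d) ℂ :=
  Matrix.of fun i j => if i = j then ω d ^ (i : ℕ) else 0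

/-- The generalized Pauli operator `S_{d,(k₁,k₂)} = X_d^{k₁} Z_d^{k₂}`. -/
def Smat (d : ℕ) (k : Fin d × Fin d) : Matrix (Fin d) (Fin d) ℂ :=
  Xmat d ^ (k.1 : ℕ) * Zmat d ^ (k.2 : ℕ)

/-- Apply a local operator `A l` to each tensor factor of a multipartite vector `ψ`,
i.e. the vector `(⊗_l A l) ψ`. -/
def applyLocal {n d : ℕ} (A : Fin n → Matrix (Fin d) (Fin d) ℂ) (ψ : Idx n d → ℂ) :
    Idx n d → ℂ :=
  fun x => ∑ y : Idx n d, (∏ l, A l (x l) (y l)) * ψ y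

/-- The computational (standard) basis of `ℂ^d`, the eigenbasis of `Z_d`. -/
def stdBasis (d : ℕ) : Fin d → Fin d → ℂ :=
  fun i x => if x = i then 1 else 0

/-- The Fourier basis of `ℂ^d`, the eigenbasis of `X_d`. -/
def fourierBasis (d : ℕ) : Fin d → Fin d → ℂ :=
  fun i x => (((Real.sqrt d)⁻¹ : ℝ) : ℂ) * ω d ^ ((i : ℕ) * (x : ℕ))

/-- The `n`-fold tensor product `⊗_l A l` as a matrix on the joint system. -/
def tensorN {n d : ℕ} (A : Fin n → Matrix (Fin d) (Fin d) ℂ) :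
    Matrix (Idx n d) (Idx n d) ℂ :=
  Matrix.of fun x y => ∏ l, A l (x l) (y l)

/-- Full separability of an `n`-partite density operator. -/
def FullySep {n d : ℕ} (ρ : Matrix (Idx n d) (Idx n d) ℂ) : Prop :=
  ∃ (J : ℕ) (p : Fin J → ℝ) (σ : Fin J → Fin n → Matrix (Fin d) (Fin d) ℂ),
    (∀ j, 0 ≤ p j) ∧ (∑ j, p j) = 1 ∧ (∀ j l, IsDensityOp (σ j l)) ∧
    ρ = ∑ j, p j • tensorN (σ j)

/-- generalized GHZ state `(1/√d) ∑_i |i⟩^{⊗n}`. -/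
def GHZvec (d n : ℕ) : Idx n d → ℂ :=
  fun x => if ∀ l l', x l = x l' then (((Real.sqrt d)⁻¹ : ℝ) : ℂ) else 0


def sigmaX : Matrix (Fin 2) (Fin 2) ℂ := !![0, 1; 1, 0]
def sigmaY : Matrix (Fin 2) (Fin 2) ℂ := !![0, -Complex.I; Complex.I, 0]
def sigmaZ : Matrix (Fin 2) (Fin 2) ℂ := !![1, 0; 0, -1]

open Finset
open scoped Matrix

section InsertAt

variable {n d : ℕ}

lemma funSplitAt_insertAt (l : Fin n) (i : Fin d) (g : {m : Fin n // m ≠ l} → Fin d) :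
    Equiv.funSplitAt l (Fin d) (insertAt l i g) = (i, g) := by
  ext m
  · simp [insertAt]
  · simp [insertAt, m.2]

lemma insertAt_eq_funSplitAt_symm (l : Fin n) (i : Fin d) (g : {m : Fin n // m ≠ l} → Fin d) :
    insertAt l i g = (Equiv.funSplitAt l (Fin d)).symm (i, g) := by
  rw [Equiv.eq_symm_apply, funSplitAt_insertAt]

@[simp] lemma insertAt_self (l : Fin n) (i : Fin d) (g : {m : Fin n // m ≠ l} → Fin d) :
    insertAt l i g l = i := dif_pos rfl

@[simp] lemma insertAt_coe (l : Fin n) (i : Fin d) (g : {m : Fin n // m ≠ l} → Fin d)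
    (m : {m : Fin n // m ≠ l}) : insertAt l i g m = g m := dif_neg m.2

lemma sum_eq_sum_insertAt {M : Type*} [AddCommMonoid M] (l : Fin n) (f : Idx n d → M) :
    ∑ x, f x = ∑ i, ∑ g, f (insertAt l i g) := by
  rw [← (Equiv.funSplitAt l (Fin d)).symm.sum_comp, Fintype.sum_prod_type]
  simp only [insertAt_eq_funSplitAt_symm]

lemma margAt_eq_sum_insertAt (p : Idx n d → ℝ) (l : Fin n) (i : Fin d) :
    margAt p l i = ∑ g, p (insertAt l i g) := by
  simp [margAt, sum_eq_sum_insertAt l]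

lemma sum_prod_insertAt {R : Type*} [CommSemiring R] (l : Fin n) (i : Fin d)
    (F : Fin n → Fin d → R) :
    ∑ g, ∏ m, F m (insertAt l i g m) = F l i * ∏ m : {m : Fin n // m ≠ l}, ∑ a, F m a := by
  simp_rw [Fintype.prod_eq_mul_prod_subtype_ne _ l, insertAt_self, insertAt_coe,
    Fintype.prod_sum, mul_sum]

end InsertAt

section Entropy

lemma neg_mul_logb_sum_le {ι : Type*} (s : Finset ι) (f : ι → ℝ) (hf : ∀ i ∈ s, 0 ≤ f i) :
    -((∑ i ∈ s, f i) * Real.logb 2 (∑ i ∈ s, f i)) ≤ ∑ i ∈ s, -(f i * Real.logb 2 (f i)) := by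
  rw [sum_mul, ← sum_neg_distrib]
  refine sum_le_sum fun i hi => neg_le_neg ?_
  rcases (hf i hi).eq_or_lt with h | h
  · simp [← h]
  · exact mul_le_mul_of_nonneg_left
      (Real.logb_le_logb_of_le one_lt_two h (single_le_sum hf hi)) h.le

variable {n d : ℕ}

lemma shannon_margRest_le (p : Idx n d → ℝ) (hp : ∀ x, 0 ≤ p x) (l : Fin n) :
    shannon (margRest p l) ≤ shannon p := by
  rw [shannon, shannon, sum_eq_sum_insertAt l, sum_comm]
  exact sum_le_sum fun g _ => neg_mul_logb_sum_le _ _ fun i _ => hp _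

lemma shannon_margRest_eq (p : Idx n d → ℝ) (l : Fin n)
    (f : ({m : Fin n // m ≠ l} → Fin d) → Fin d)
    (hf : ∀ g i, i ≠ f g → p (insertAt l i g) = 0) :
    shannon (margRest p l) = shannon p := by
  rw [shannon, shannon, sum_eq_sum_insertAt l, sum_comm]
  refine sum_congr rfl fun g _ => ?_
  rw [margRest, sum_eq_single (f g) (fun i _ hi => hf g i hi) (by simp),
    sum_eq_single (f g) (fun i _ hi => by simp [hf g i hi]) (by simp)]

lemma mutualInfo_le_shannon_margAt (p : Idx n d → ℝ) (hp : ∀ x, 0 ≤ p x) (l : Fin n) :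
    mutualInfo p l ≤ shannon (margAt p l) := by
  have := shannon_margRest_le p hp l
  rw [mutualInfo]
  linarith

lemma mutualInfo_eq_shannon_margAt (p : Idx n d → ℝ) (l : Fin n)
    (f : ({m : Fin n // m ≠ l} → Fin d) → Fin d)
    (hf : ∀ g i, i ≠ f g → p (insertAt l i g) = 0) :
    mutualInfo p l = shannon (margAt p l) := by
  rw [mutualInfo, shannon_margRest_eq p l f hf, add_sub_cancel_right]

lemma shannon_uniform (α : Type*) [Fintype α] :
    shannon (fun _ : α => ((Fintype.card α : ℝ))⁻¹) = Real.logb 2 (Fintype.card α) := by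
  rcases eq_or_ne (Fintype.card α : ℝ) 0 with h | h
  · simp [shannon, h]
  · simp only [shannon, Real.logb_inv, mul_neg, neg_neg, sum_const, card_univ, nsmul_eq_mul]
    field_simp

end Entropy

section Marginal

variable {n d : ℕ}

lemma IsONB.conjTranspose_mul_self {B : Fin d → Fin d → ℂ} (hB : IsONB B) :
    (Matrix.of B)ᴴ * Matrix.of B = 1 := by
  refine mul_eq_one_comm.mp (Matrix.ext fun i j => ?_)
  simpa [Matrix.mul_apply, Matrix.one_apply, mul_comm, eq_comm] using hB j i

lemma IsONB.sum_conj_mul {B : Fin d → Fin d → ℂ} (hB : IsONB B) (x y : Fin d) :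
    ∑ i, (starRingEnd ℂ) (B i x) * B i y = if x = y then 1 else 0 := by
  simpa [Matrix.mul_apply, Matrix.one_apply] using congrFun₂ hB.conjTranspose_mul_self x y

lemma sum_insertAt_prod_conj_mul_prod {B : Fin n → Fin d → Fin d → ℂ} (hB : ∀ m, IsONB (B m))
    (l : Fin n) (i : Fin d) (x y : Idx n d) :
    ∑ g, (∏ m, (starRingEnd ℂ) (B m (insertAt l i g m) (x m))) * ∏ m, B m (insertAt l i g m) (y m)
      = (starRingEnd ℂ) (B l i (x l)) * B l i (y l) *
          if ∀ m : {m : Fin n // m ≠ l}, x m = y m then 1 else 0 := by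
  simp_rw [← prod_mul_distrib]
  rw [sum_prod_insertAt l i fun m a => (starRingEnd ℂ) (B m a (x m)) * B m a (y m)]
  simp_rw [(hB _).sum_conj_mul, prod_boole, mem_univ, true_implies]

lemma margAt_jointProb {B : Fin n → Fin d → Fin d → ℂ} (hB : ∀ m, IsONB (B m))
    (ρ : Matrix (Idx n d) (Idx n d) ℂ) (l : Fin n) (i : Fin d) :
    margAt (jointProb ρ B) l i = (star (B l i) ⬝ᵥ (reducedAt ρ l *ᵥ B l i)).re := by
  simp only [margAt_eq_sum_insertAt, jointProb, ← Complex.re_sum]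
  congr 1
  calc _ = ∑ x, ∑ y, ρ x y * ∑ g, (∏ m, (starRingEnd ℂ) (B m (insertAt l i g m) (x m))) *
          ∏ m, B m (insertAt l i g m) (y m) := by
        rw [sum_comm]
        refine sum_congr rfl fun x _ => ?_
        rw [sum_comm]
        refine sum_congr rfl fun y _ => ?_
        rw [mul_sum]
        exact sum_congr rfl fun g _ => by ring
    _ = ∑ x, ∑ y, ρ x y * ((starRingEnd ℂ) (B l i (x l)) * B l i (y l) *
          if ∀ m : {m : Fin n // m ≠ l}, x m = y m then 1 else 0) := by
        simp_rw [sum_insertAt_prod_conj_mul_prod hB]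
    _ = ∑ a, ∑ b, ∑ h, (starRingEnd ℂ) (B l i a) * ρ (insertAt l a h) (insertAt l b h) *
          B l i b := by
        rw [sum_eq_sum_insertAt l]
        simp_rw [sum_eq_sum_insertAt l (ρ _ · * _), insertAt_self, insertAt_coe,
          ← funext_iff, mul_ite, mul_one, mul_zero, sum_ite_eq, if_pos (mem_univ _)]
        refine sum_congr rfl fun a _ => ?_
        rw [sum_comm]
        exact sum_congr rfl fun b _ => sum_congr rfl fun h _ => by ring
    _ = _ := by
        simp only [dotProduct, Matrix.mulVec, reducedAt, Matrix.of_apply, mul_sum, sum_mul,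
          Pi.star_apply, Complex.star_def, mul_assoc]

end Marginal

section PureState

variable {n d : ℕ}

lemma margAt_jointProb_of_reducedAt_eq {B : Fin n → Fin d → Fin d → ℂ} (hB : ∀ m, IsONB (B m))
    {ρ : Matrix (Idx n d) (Idx n d) ℂ} {l : Fin n} (hρ : reducedAt ρ l = (d : ℂ)⁻¹ • 1)
    (i : Fin d) : margAt (jointProb ρ B) l i = (d : ℝ)⁻¹ := by
  have hnorm : star (B l i) ⬝ᵥ B l i = 1 := by simpa [dotProduct] using hB l i i
  rw [margAt_jointProb hB, hρ, Matrix.smul_mulVec, Matrix.one_mulVec, dotProduct_smul, hnorm]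
  simp

lemma shannon_margAt_of_reducedAt_eq {B : Fin n → Fin d → Fin d → ℂ} (hB : ∀ m, IsONB (B m))
    {ρ : Matrix (Idx n d) (Idx n d) ℂ} {l : Fin n} (hρ : reducedAt ρ l = (d : ℂ)⁻¹ • 1) :
    shannon (margAt (jointProb ρ B) l) = Real.logb 2 d := by
  have huniform : margAt (jointProb ρ B) l = fun _ => ((Fintype.card (Fin d) : ℕ) : ℝ)⁻¹ := by
    ext i
    rw [margAt_jointProb_of_reducedAt_eq hB hρ, Fintype.card_fin]
  rw [huniform, shannon_uniform, Fintype.card_fin]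

def amplitude (B : Fin n → Fin d → Fin d → ℂ) (ψ : Idx n d → ℂ) (j : Idx n d) : ℂ :=
  ∑ x, (∏ l, (starRingEnd ℂ) (B l (j l) (x l))) * ψ x

lemma jointProb_proj (B : Fin n → Fin d → Fin d → ℂ) (ψ : Idx n d → ℂ) (j : Idx n d) :
    jointProb (proj ψ) B j = Complex.normSq (amplitude B ψ j) := by
  rw [← Complex.ofReal_re (Complex.normSq _), ← Complex.mul_conj, amplitude, map_sum,
    sum_mul_sum, jointProb]
  congr 1
  refine sum_congr rfl fun x _ => sum_congr rfl fun y _ => ?_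
  simp only [proj, Matrix.of_apply, map_mul, map_prod, Complex.conj_conj]
  ring

lemma jointProb_proj_nonneg (B : Fin n → Fin d → Fin d → ℂ) (ψ : Idx n d → ℂ) (j : Idx n d) :
    0 ≤ jointProb (proj ψ) B j := by
  rw [jointProb_proj]
  exact Complex.normSq_nonneg _

lemma mutualInfo_jointProb_proj_le {B : Fin n → Fin d → Fin d → ℂ} (hB : ∀ m, IsONB (B m))
    {ψ : Idx n d → ℂ} {l : Fin n} (hψ : reducedAt (proj ψ) l = (d : ℂ)⁻¹ • 1) :
    mutualInfo (jointProb (proj ψ) B) l ≤ Real.logb 2 d :=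
  shannon_margAt_of_reducedAt_eq hB hψ ▸
    mutualInfo_le_shannon_margAt _ (jointProb_proj_nonneg B ψ) l

lemma amplitude_applyLocal {B : Fin n → Fin d → Fin d → ℂ} {A : Fin n → Matrix (Fin d) (Fin d) ℂ}
    {c : Fin n → Fin d → ℂ} (hA : ∀ l i, star (B l i) ᵥ* A l = c l i • star (B l i))
    (ψ : Idx n d → ℂ) (j : Idx n d) :
    amplitude B (applyLocal A ψ) j = (∏ l, c l (j l)) * amplitude B ψ j := by
  have hrow : ∀ y : Idx n d, ∑ x : Idx n d, (∏ l, (starRingEnd ℂ) (B l (j l) (x l))) *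
      ∏ l, A l (x l) (y l) = (∏ l, c l (j l)) * ∏ l, (starRingEnd ℂ) (B l (j l) (y l)) := by
    intro y
    simp_rw [← prod_mul_distrib]
    rw [← Fintype.prod_sum fun l a => (starRingEnd ℂ) (B l (j l) a) * A l a (y l)]
    refine prod_congr rfl fun l _ => ?_
    simpa [Matrix.vecMul, dotProduct] using congrFun (hA l (j l)) (y l)
  simp only [amplitude, applyLocal, mul_sum]
  rw [sum_comm]
  refine sum_congr rfl fun y _ => ?_
  simp_rw [← mul_assoc, ← sum_mul, hrow y]

end PureState

section Parity

variable {n : ℕ}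

lemma amplitude_eq_zero_of_odd {b : Fin 2 → Fin 2 → ℂ} {σ : Matrix (Fin 2) (Fin 2) ℂ}
    (hσ : ∀ i, star (b i) ᵥ* σ = (-1 : ℂ) ^ (i : ℕ) • star (b i)) {ψ : Idx n 2 → ℂ}
    (hψ : applyLocal (fun _ => σ) ψ = ψ) {j : Idx n 2} (hj : Odd (∑ l, (j l : ℕ))) :
    amplitude (fun _ => b) ψ j = 0 := by
  have h := amplitude_applyLocal (c := fun _ i => (-1) ^ (i : ℕ)) (fun _ => hσ) ψ j
  rw [hψ, prod_pow_eq_pow_sum, hj.neg_one_pow, neg_one_mul] at h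
  exact self_eq_neg.mp h

lemma odd_sum_insertAt {l : Fin n} {g : {m : Fin n // m ≠ l} → Fin 2} {i : Fin 2}
    (hi : (i : ℕ) ≠ (∑ m, (g m : ℕ)) % 2) : Odd (∑ m, (insertAt l i g m : ℕ)) := by
  rw [Fintype.sum_eq_add_sum_subtype_ne _ l, Nat.odd_iff]
  simp only [insertAt_self, insertAt_coe]
  omega

lemma mutualInfo_jointProb_proj_eigenbasis {b : Fin 2 → Fin 2 → ℂ} (hb : IsONB b)
    {σ : Matrix (Fin 2) (Fin 2) ℂ} (hσ : ∀ i, star (b i) ᵥ* σ = (-1 : ℂ) ^ (i : ℕ) • star (b i))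
    {ψ : Idx n 2 → ℂ} (hψ : applyLocal (fun _ => σ) ψ = ψ) {l : Fin n}
    (hred : reducedAt (proj ψ) l = (2 : ℂ)⁻¹ • 1) :
    mutualInfo (jointProb (proj ψ) fun _ => b) l = 1 := by
  have hvanish : ∀ g i, i ≠ ⟨(∑ m, (g m : ℕ)) % 2, Nat.mod_lt _ two_pos⟩ →
      jointProb (proj ψ) (fun _ => b) (insertAt l i g) = 0 := fun g i hi => by
    rw [jointProb_proj, amplitude_eq_zero_of_odd hσ hψ
      (odd_sum_insertAt fun h => hi (Fin.ext h)), map_zero]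
  rw [mutualInfo_eq_shannon_margAt _ l _ hvanish,
    shannon_margAt_of_reducedAt_eq (fun _ => hb) (by rwa [Nat.cast_ofNat]),
    Nat.cast_ofNat, Real.logb_self_eq_one one_lt_two]

end Parity

section Pauli

def invSqrtTwo : ℂ := ((Real.sqrt 2)⁻¹ : ℝ)

lemma conj_invSqrtTwo : (starRingEnd ℂ) invSqrtTwo = invSqrtTwo := Complex.conj_ofReal _

lemma invSqrtTwo_mul_self : invSqrtTwo * invSqrtTwo = 2⁻¹ := by
  rw [invSqrtTwo, ← Complex.ofReal_mul, ← mul_inv, Real.mul_self_sqrt zero_le_two]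
  push_cast
  rfl

lemma norm_invSqrtTwo_sq : ‖invSqrtTwo‖ ^ 2 = 2⁻¹ := by
  rw [Complex.sq_norm, invSqrtTwo, Complex.normSq_ofReal, ← mul_inv,
    Real.mul_self_sqrt zero_le_two]

def xBasis : Fin 2 → Fin 2 → ℂ := !![invSqrtTwo, invSqrtTwo; invSqrtTwo, -invSqrtTwo]

def yBasis : Fin 2 → Fin 2 → ℂ :=
  !![invSqrtTwo, invSqrtTwo * Complex.I; invSqrtTwo, -(invSqrtTwo * Complex.I)]

lemma isONB_stdBasis (d : ℕ) : IsONB (stdBasis d) := by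
  intro i j
  simp [stdBasis, eq_comm]

lemma isONB_xBasis : IsONB xBasis := by
  intro i j
  fin_cases i <;> fin_cases j <;>
    norm_num [xBasis, Fin.sum_univ_two, conj_invSqrtTwo, invSqrtTwo_mul_self]

lemma isONB_yBasis : IsONB yBasis := by
  intro i j
  fin_cases i <;> fin_cases j <;>
    norm_num [yBasis, Fin.sum_univ_two, conj_invSqrtTwo, mul_mul_mul_comm _ Complex.I,
      invSqrtTwo_mul_self]

lemma sigmaX_mulVec_xBasis (i : Fin 2) : sigmaX *ᵥ xBasis i = (-1 : ℂ) ^ (i : ℕ) • xBasis i := by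
  ext x
  fin_cases i <;> fin_cases x <;>
    simp [xBasis, sigmaX, Matrix.mulVec, dotProduct, Fin.sum_univ_two]

lemma sigmaY_mulVec_yBasis (i : Fin 2) : sigmaY *ᵥ yBasis i = (-1 : ℂ) ^ (i : ℕ) • yBasis i := by
  ext x
  fin_cases i <;> fin_cases x <;>
    simp [yBasis, sigmaY, Matrix.mulVec, dotProduct, Fin.sum_univ_two, mul_left_comm Complex.I,
      mul_comm Complex.I invSqrtTwo]

lemma sigmaZ_mulVec_stdBasis (i : Fin 2) :
    sigmaZ *ᵥ stdBasis 2 i = (-1 : ℂ) ^ (i : ℕ) • stdBasis 2 i := by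
  ext x
  fin_cases i <;> fin_cases x <;> simp [stdBasis, sigmaZ, Matrix.mulVec, dotProduct]

lemma mutUnbiased_xBasis_yBasis : MutUnbiased xBasis yBasis := by
  intro i j
  fin_cases i <;> fin_cases j <;>
    norm_num [xBasis, yBasis, Fin.sum_univ_two, conj_invSqrtTwo, ← mul_assoc, invSqrtTwo_mul_self,
      Complex.sq_norm, Complex.normSq_apply]

lemma mutUnbiased_xBasis_stdBasis : MutUnbiased xBasis (stdBasis 2) := by
  intro i j
  fin_cases i <;> fin_cases j <;> simp [xBasis, stdBasis, conj_invSqrtTwo, norm_invSqrtTwo_sq]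

lemma mutUnbiased_yBasis_stdBasis : MutUnbiased yBasis (stdBasis 2) := by
  intro i j
  fin_cases i <;> fin_cases j <;> simp [yBasis, stdBasis, conj_invSqrtTwo, norm_invSqrtTwo_sq]

lemma sigmaX_isHermitian : sigmaX.IsHermitian := by
  ext i j
  fin_cases i <;> fin_cases j <;> simp [sigmaX]

lemma sigmaY_isHermitian : sigmaY.IsHermitian := by
  ext i j
  fin_cases i <;> fin_cases j <;> simp [sigmaY]

lemma sigmaZ_isHermitian : sigmaZ.IsHermitian := by
  ext i j
  fin_cases i <;> fin_cases j <;> simp [sigmaZ]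

lemma MutUnbiased.symm {d : ℕ} {B B' : Fin d → Fin d → ℂ} (h : MutUnbiased B B') :
    MutUnbiased B' B := by
  intro i j
  rw [← h j i, ← Complex.norm_conj, map_sum]
  simp_rw [map_mul, Complex.conj_conj, mul_comm]

def pauli : Fin 3 → Matrix (Fin 2) (Fin 2) ℂ := ![sigmaX, sigmaY, sigmaZ]

def pauliBasis : Fin 3 → Fin 2 → Fin 2 → ℂ := ![xBasis, yBasis, stdBasis 2]

lemma isONB_pauliBasis (k : Fin 3) : IsONB (pauliBasis k) := by
  fin_cases k
  exacts [isONB_xBasis, isONB_yBasis, isONB_stdBasis 2]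

lemma pauli_isHermitian (k : Fin 3) : (pauli k).IsHermitian := by
  fin_cases k
  exacts [sigmaX_isHermitian, sigmaY_isHermitian, sigmaZ_isHermitian]

lemma pauli_mulVec_pauliBasis (k : Fin 3) (i : Fin 2) :
    pauli k *ᵥ pauliBasis k i = (-1 : ℂ) ^ (i : ℕ) • pauliBasis k i := by
  fin_cases k
  exacts [sigmaX_mulVec_xBasis i, sigmaY_mulVec_yBasis i, sigmaZ_mulVec_stdBasis i]

lemma mutUnbiased_pauliBasis {k k' : Fin 3} (h : k ≠ k') :
    MutUnbiased (pauliBasis k) (pauliBasis k') := by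
  fin_cases k <;> fin_cases k'
  all_goals first
    | exact absurd rfl h
    | exact mutUnbiased_xBasis_yBasis | exact mutUnbiased_xBasis_stdBasis
    | exact mutUnbiased_yBasis_stdBasis | exact mutUnbiased_xBasis_yBasis.symm
    | exact mutUnbiased_xBasis_stdBasis.symm | exact mutUnbiased_yBasis_stdBasis.symm

lemma star_vecMul_of_mulVec_eq {ι : Type*} [Fintype ι] {A : Matrix ι ι ℂ} (hA : A.IsHermitian)
    {v : ι → ℂ} {c : ℂ} (h : A *ᵥ v = c • v) : star v ᵥ* A = star c • star v := by
  rw [← hA.eq, ← Matrix.star_mulVec, h, star_smul]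

lemma star_pauliBasis_vecMul_pauli (k : Fin 3) (i : Fin 2) :
    star (pauliBasis k i) ᵥ* pauli k = (-1 : ℂ) ^ (i : ℕ) • star (pauliBasis k i) := by
  rw [star_vecMul_of_mulVec_eq (pauli_isHermitian k) (pauli_mulVec_pauliBasis k i)]
  simp

end Pauli

section Correlation

variable {n d N : ℕ}

lemma CNval_le_of_forall_le (hn : n ≠ 0) (hN : N ≠ 0) {ρ : Matrix (Idx n d) (Idx n d) ℂ}
    {B : Fin N → Fin n → Fin d → Fin d → ℂ} {c : ℝ}
    (h : ∀ k l, mutualInfo (jointProb ρ (B k)) l ≤ c) : CNval N ρ B ≤ c := by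
  calc CNval N ρ B ≤ 1 / (n * N) * ∑ _k : Fin N, ∑ _l : Fin n, c := by
        unfold CNval
        gcongr with k _ l _
        exact h k l
    _ = c := by
        simp only [sum_const, card_univ, Fintype.card_fin, nsmul_eq_mul]
        field_simp

lemma CNval_eq_of_forall_eq (hn : n ≠ 0) (hN : N ≠ 0) {ρ : Matrix (Idx n d) (Idx n d) ℂ}
    {B : Fin N → Fin n → Fin d → Fin d → ℂ} {c : ℝ}
    (h : ∀ k l, mutualInfo (jointProb ρ (B k)) l = c) : CNval N ρ B = c := by
  simp only [CNval, h, sum_const, card_univ, Fintype.card_fin, nsmul_eq_mul]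
  field_simp

end Correlation

section PauliInvariant

variable {n N : ℕ}

lemma CNval_proj_le_one (hn : n ≠ 0) (hN : N ≠ 0) {ψ : Idx n 2 → ℂ}
    (hred : ∀ l, reducedAt (proj ψ) l = (2 : ℂ)⁻¹ • 1) {B : Fin N → Fin n → Fin 2 → Fin 2 → ℂ}
    (hB : ValidMUBs N B) : CNval N (proj ψ) B ≤ 1 := by
  refine CNval_le_of_forall_le hn hN fun k l => ?_
  have := mutualInfo_jointProb_proj_le (hB.1 k) (l := l) (by rw [Nat.cast_ofNat]; exact hred l)
  rwa [Nat.cast_ofNat, Real.logb_self_eq_one one_lt_two] at this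

lemma CNval_proj_pauliBasis (hn : n ≠ 0) (hN : N ≠ 0) {ψ : Idx n 2 → ℂ}
    (hred : ∀ l, reducedAt (proj ψ) l = (2 : ℂ)⁻¹ • 1)
    (hψ : ∀ k, applyLocal (fun _ => pauli k) ψ = ψ) (κ : Fin N → Fin 3) :
    CNval N (proj ψ) (fun k _ => pauliBasis (κ k)) = 1 :=
  CNval_eq_of_forall_eq hn hN fun k l => mutualInfo_jointProb_proj_eigenbasis
    (isONB_pauliBasis (κ k)) (star_pauliBasis_vecMul_pauli (κ k)) (hψ (κ k)) (hred l)

lemma isGreatest_CNvalues_proj (hn : n ≠ 0) (hN : N ≠ 0) (hN3 : N ≤ 3) {ψ : Idx n 2 → ℂ}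
    (hred : ∀ l, reducedAt (proj ψ) l = (2 : ℂ)⁻¹ • 1)
    (hψ : ∀ k, applyLocal (fun _ => pauli k) ψ = ψ) :
    IsGreatest (CNvalues N (proj ψ)) 1 := by
  refine ⟨⟨fun k _ => pauliBasis (Fin.castLE hN3 k), ⟨fun k _ => isONB_pauliBasis _,
    fun _ k k' h => mutUnbiased_pauliBasis ((Fin.castLE_injective hN3).ne h)⟩,
    (CNval_proj_pauliBasis hn hN hred hψ _).symm⟩, ?_⟩
  rintro _ ⟨B, hB, rfl⟩
  exact CNval_proj_le_one hn hN hred hB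

end PauliInvariant

theorem four_qubit_pauli_invariant_maximizes_C3_general
    (ψ : Idx 4 2 → ℂ)
    (hred : ∀ l, reducedAt (proj ψ) l = ((2 : ℂ))⁻¹ • 1)
    (hx : applyLocal (fun _ : Fin 4 => sigmaX) ψ = ψ)
    (hy : applyLocal (fun _ : Fin 4 => sigmaY) ψ = ψ)
    (hz : applyLocal (fun _ : Fin 4 => sigmaZ) ψ = ψ) :
    IsGreatest (CNvalues 3 (proj ψ)) 1 ∧ Real.logb 2 2 = 1 ∧
    (∃ B : Fin 3 → Fin 2 → Fin 2 → ℂ,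
      (∀ k, IsONB (B k)) ∧
      (∀ i, ∃ c : ℂ, Matrix.mulVec sigmaX (B 0 i) = c • B 0 i) ∧
      (∀ i, ∃ c : ℂ, Matrix.mulVec sigmaY (B 1 i) = c • B 1 i) ∧
      (∀ i, ∃ c : ℂ, Matrix.mulVec sigmaZ (B 2 i) = c • B 2 i) ∧
      (∀ k k', k ≠ k' → MutUnbiased (B k) (B k')) ∧
      CNval 3 (proj ψ) (fun k _ => B k) = 1) ∧
    IsGreatest (CNvalues 2 (proj ψ)) 1 := by
  have hψ : ∀ k, applyLocal (fun _ => pauli k) ψ = ψ := by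
    intro k
    fin_cases k
    exacts [hx, hy, hz]
  refine ⟨isGreatest_CNvalues_proj four_ne_zero three_ne_zero le_rfl hred hψ,
    Real.logb_self_eq_one one_lt_two,
    ⟨pauliBasis, isONB_pauliBasis, fun i => ⟨_, pauli_mulVec_pauliBasis 0 i⟩,
      fun i => ⟨_, pauli_mulVec_pauliBasis 1 i⟩, fun i => ⟨_, pauli_mulVec_pauliBasis 2 i⟩,
      fun _ _ => mutUnbiased_pauliBasis,
      CNval_proj_pauliBasis four_ne_zero three_ne_zero hred hψ id⟩,
    isGreatest_CNvalues_proj four_ne_zero two_ne_zero (by norm_num) hred hψ⟩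

/-- A four-qubit state with completely mixed single-qubit reduced states which is
invariant under `σ_x^{⊗4}`, `σ_y^{⊗4}` and `σ_z^{⊗4}` maximizes `𝒞₃` (value `1 = log₂ 2`),
the maximum being attained by the Pauli eigenbases, which form a complete set of three
MUBs of `ℂ²`; in particular it also maximizes `𝒞₂`. -/
theorem four_qubit_pauli_invariant_maximizes_C3
    (ψ : Idx 4 2 → ℂ) (hunit : ∑ x, Complex.normSq (ψ x) = 1)
    (hred : ∀ l, reducedAt (proj ψ) l = ((2 : ℂ))⁻¹ • 1)
    (hx : applyLocal (fun _ : Fin 4 => sigmaX) ψ = ψ)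
    (hy : applyLocal (fun _ : Fin 4 => sigmaY) ψ = ψ)
    (hz : applyLocal (fun _ : Fin 4 => sigmaZ) ψ = ψ) :
    IsGreatest (CNvalues 3 (proj ψ)) 1 ∧ Real.logb 2 2 = 1 ∧
    (∃ B : Fin 3 → Fin 2 → Fin 2 → ℂ,
      (∀ k, IsONB (B k)) ∧
      (∀ i, ∃ c : ℂ, Matrix.mulVec sigmaX (B 0 i) = c • B 0 i) ∧
      (∀ i, ∃ c : ℂ, Matrix.mulVec sigmaY (B 1 i) = c • B 1 i) ∧
      (∀ i, ∃ c : ℂ, Matrix.mulVec sigmaZ (B 2 i) = c • B 2 i) ∧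
      (∀ k k', k ≠ k' → MutUnbiased (B k) (B k')) ∧
      CNval 3 (proj ψ) (fun k _ => B k) = 1) ∧
    IsGreatest (CNvalues 2 (proj ψ)) 1 :=
  four_qubit_pauli_invariant_maximizes_C3_general ψ hred hx hy hz

end
end Paper
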